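/- arXiv:0909.0617 — 2 statements merged into one kernel-verified Lean document; each statement's English description precedes it below -/
import Mathlib

section
/- Let M₀, M₁, M₂, M₃ ≥ 0 and let (Sₙ) be the monic orthogonal sequence for the four-mass Hermite–Sobolev inner product. Let (Lₙ) be the sequence of real polynomials such that each Lₙ is monic of degree n and ∫₀^∞ Lₙ(x)p(x)x^{−1/2}e^{−x} dx + M₀Lₙ(0)p(0) + 4M₂Lₙ′(0)p′(0) = 0 for every polynomial p with deg p < n, and let (L̃ₙ) be the sequence such that each L̃ₙ is monic of degree n and ∫₀^∞ L̃ₙ(x)p(x)x^{1/2}e^{−x} dx + M₁L̃ₙ(0)p(0) + 36M₃L̃ₙ′(0)p′(0) = 0 for every polynomial p with deg p < n. Then for every n ≥ 0, S₂ₙ(x) = Lₙ(x²) and S₂ₙ₊₁(x) = x·L̃ₙ(x²) as identities of real polynomials. -/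
open Polynomial Filter MeasureTheory

/-- The four-mass Hermite--Sobolev inner product with masses `M₀, M₁, M₂, M₃` at the origin. -/
noncomputable def fourMassInner (M₀ M₁ M₂ M₃ : ℝ) (P R : Polynomial ℝ) : ℝ :=
  (∫ x : ℝ, P.eval x * R.eval x * Real.exp (-x ^ 2)) +
    M₀ * (P.eval 0 * R.eval 0) +
    M₁ * ((derivative P).eval 0 * (derivative R).eval 0) +
    M₂ * ((derivative (derivative P)).eval 0 * (derivative (derivative R)).eval 0) +
    M₃ * ((derivative (derivative (derivative P))).eval 0 *
      (derivative (derivative (derivative R))).eval 0)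

/-- `S` is the monic orthogonal polynomial sequence for the inner product `ip`. -/
def IsMonicOrthSeq (ip : Polynomial ℝ → Polynomial ℝ → ℝ) (S : ℕ → Polynomial ℝ) : Prop :=
  ∀ n : ℕ, (S n).Monic ∧ (S n).degree = (n : ℕ) ∧
    ∀ p : Polynomial ℝ, p.degree < (n : ℕ) → ip (S n) p = 0

/-- The Laguerre--Sobolev type inner product with weight `x^α e^{-x}` on `(0,∞)` and
point masses `N₀`, `N₁` on value and first derivative at the origin. -/
noncomputable def laguerreSobolevInner (α N₀ N₁ : ℝ) (P R : Polynomial ℝ) : ℝ :=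
  (∫ x in Set.Ioi (0 : ℝ), P.eval x * R.eval x * x ^ α * Real.exp (-x)) +
    N₀ * (P.eval 0 * R.eval 0) +
    N₁ * ((derivative P).eval 0 * (derivative R).eval 0)

/-!
The substitution `t = x²` turns the Gaussian integral of `P(x²) Q(x²)` into the Laguerre integral
of `P Q` against `t^{-1/2} e^{-t}`, and that of `x P(x²) · x Q(x²)` into the one against
`t^{1/2} e^{-t}`; the integral of an even times an odd polynomial vanishes. At the origin the
`k`-th derivative is `k!` times the `k`-th coefficient, so the masses `M₂, M₃` on `P(x²)` and
`x P(x²)` act on `P'(0)` with the factors `2!² = 4` and `3!² = 36`, and all mixed terms vanish.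
Thus `L n (x²)` and `x L̃ n (x²)` are monic of degrees `2n`, `2n + 1` and orthogonal to all lower
monomials; since the four-mass product is positive definite, they are `S (2n)` and `S (2n + 1)`.
-/

open Real Set

theorem Polynomial.iterate_derivative_eval_zero {R : Type*} [Semiring R] (P : R[X]) (k : ℕ) :
    (derivative^[k] P).eval 0 = k.factorial * P.coeff k := by
  rw [← coeff_zero_eq_eval_zero, coeff_iterate_derivative, zero_add, Nat.descFactorial_self,
    nsmul_eq_mul]

theorem Polynomial.X_pow_two_mul_eq_comp {R : Type*} [CommSemiring R] (j : ℕ) :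
    (X : R[X]) ^ (2 * j) = (X ^ j).comp (X ^ 2) := by
  rw [X_pow_comp, ← pow_mul]

theorem Polynomial.X_pow_two_mul_add_one_eq_X_mul_comp {R : Type*} [CommSemiring R] (j : ℕ) :
    (X : R[X]) ^ (2 * j + 1) = X * (X ^ j).comp (X ^ 2) := by
  rw [X_pow_comp, ← pow_mul, pow_succ']

theorem Polynomial.Monic.comp_X_sq {R : Type*} [CommSemiring R] [Nontrivial R] {P : R[X]}
    (hP : P.Monic) {n : ℕ} (hn : P.degree = n) :
    (P.comp (X ^ 2)).Monic ∧ (P.comp (X ^ 2)).degree = ↑(2 * n) := by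
  have hm : (P.comp (X ^ 2)).Monic := hP.expand two_pos
  refine ⟨hm, ?_⟩
  rw [degree_eq_natDegree hm.ne_zero, ← expand_eq_comp_X_pow, natDegree_expand,
    natDegree_eq_of_degree_eq_some hn, mul_comm]

theorem Polynomial.Monic.X_mul_comp_X_sq {R : Type*} [CommSemiring R] [Nontrivial R] {P : R[X]}
    (hP : P.Monic) {n : ℕ} (hn : P.degree = n) :
    (X * P.comp (X ^ 2)).Monic ∧ (X * P.comp (X ^ 2)).degree = ↑(2 * n + 1) := by
  obtain ⟨hm, hdeg⟩ := hP.comp_X_sq hn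
  refine ⟨monic_X.mul hm, ?_⟩
  rw [hm.degree_mul, degree_X, hdeg, add_comm]
  rfl

theorem Polynomial.degreeLT_le_ker {R M : Type*} [Semiring R] [AddCommMonoid M] [Module R M]
    (φ : R[X] →ₗ[R] M) {n : ℕ} (h : ∀ k < n, φ (X ^ k) = 0) : degreeLT R n ≤ LinearMap.ker φ := by
  classical
  rw [degreeLT_eq_span_X_pow, Submodule.span_le, Finset.coe_image]
  rintro _ ⟨k, hk, rfl⟩
  exact h k (Finset.mem_range.1 hk)

theorem IsMonicOrthSeq.eq_of_monic_of_orthogonal {ip : ℝ[X] → ℝ[X] → ℝ}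
    (sub_left : ∀ P Q R, ip (P - Q) R = ip P R - ip Q R) (pos : ∀ d, d ≠ 0 → 0 < ip d d)
    {S : ℕ → ℝ[X]} (hS : IsMonicOrthSeq ip S) {n : ℕ} {T : ℝ[X]} (hT : T.Monic)
    (hTn : T.degree = n) (hT_orth : ∀ p : ℝ[X], p.degree < n → ip T p = 0) : S n = T := by
  obtain ⟨hSm, hSn, hS_orth⟩ := hS n
  by_contra hne
  have hd : (S n - T).degree < n :=
    hSn ▸ degree_sub_lt_left (hSn.trans hTn.symm) hSm.ne_zero
      (hSm.leadingCoeff.trans hT.leadingCoeff.symm)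
  have hzero : ip (S n - T) (S n - T) = 0 := by
    rw [sub_left, hS_orth _ hd, hT_orth _ hd, sub_zero]
  exact (pos _ (sub_ne_zero.2 hne)).ne' hzero

theorem integrable_eval_mul_exp_neg_sq (P : ℝ[X]) :
    Integrable fun x : ℝ => P.eval x * exp (-x ^ 2) := by
  induction P using Polynomial.induction_on' with
  | add p q hp hq =>
    simpa only [eval_add, add_mul] using
      (hp.add hq : Integrable fun x => p.eval x * exp (-x ^ 2) + q.eval x * exp (-x ^ 2))
  | monomial n a =>
    have h := integrable_rpow_mul_exp_neg_mul_sq (b := 1) one_pos (s := n)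
      (neg_one_lt_zero.trans_le n.cast_nonneg)
    simp only [Real.rpow_natCast, neg_one_mul] at h
    simpa [mul_assoc] using h.const_mul a

theorem integral_mul_self_mul_exp_neg_sq_pos {d : ℝ[X]} (hd : d ≠ 0) :
    0 < ∫ x : ℝ, (d * d).eval x * exp (-x ^ 2) := by
  obtain ⟨x, hx⟩ : ∃ x, d.eval x ≠ 0 := by
    by_contra! h
    exact hd (Polynomial.funext (by simpa using h))
  refine integral_pos_of_integrable_nonneg_nonzero (x := x) (by fun_prop)
    (integrable_eval_mul_exp_neg_sq _) (fun y => ?_) (by simp [hx, (exp_pos _).ne'])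
  dsimp only
  rw [eval_mul]
  exact mul_nonneg (mul_self_nonneg _) (exp_pos _).le

theorem integral_comp_sq (g : ℝ → ℝ) :
    ∫ x, g (x ^ 2) = ∫ t in Ioi 0, t ^ (-(1 / 2) : ℝ) * g t := by
  rw [← integral_comp_rpow_Ioi _ two_ne_zero]
  calc ∫ x, g (x ^ 2) = ∫ x, g (|x| ^ 2) := by simp only [sq_abs]
    _ = ∫ x in Ioi 0, 2 * g (x ^ 2) := by
      rw [integral_comp_abs (f := fun x => g (x ^ 2)), integral_const_mul]
    _ = _ := by
      refine setIntegral_congr_fun measurableSet_Ioi fun x (hx : 0 < x) => ?_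
      rw [← rpow_natCast, ← rpow_mul hx.le, smul_eq_mul]
      norm_num [rpow_neg_one]
      field_simp

theorem integral_mul_comp_sq (g : ℝ → ℝ) : ∫ x, x * g (x ^ 2) = 0 := by
  have h := integral_neg_eq_self (fun x : ℝ => x * g (x ^ 2)) volume
  simp only [neg_sq, neg_mul, integral_neg] at h
  linarith

theorem fourMassInner_eq_coeff (M₀ M₁ M₂ M₃ : ℝ) (P R : ℝ[X]) :
    fourMassInner M₀ M₁ M₂ M₃ P R =
      (∫ x : ℝ, (P * R).eval x * exp (-x ^ 2)) + M₀ * (P.coeff 0 * R.coeff 0) +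
        M₁ * (P.coeff 1 * R.coeff 1) + 4 * M₂ * (P.coeff 2 * R.coeff 2) +
        36 * M₃ * (P.coeff 3 * R.coeff 3) := by
  have h₁ (Q : ℝ[X]) := Q.iterate_derivative_eval_zero 1
  have h₂ (Q : ℝ[X]) := Q.iterate_derivative_eval_zero 2
  have h₃ (Q : ℝ[X]) := Q.iterate_derivative_eval_zero 3
  simp only [Function.iterate_succ, Function.iterate_zero, Function.comp_apply, id] at h₁ h₂ h₃
  rw [fourMassInner, h₁ P, h₁ R, h₂ P, h₂ R, h₃ P, h₃ R, ← coeff_zero_eq_eval_zero,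
    ← coeff_zero_eq_eval_zero]
  simp only [eval_mul, Nat.factorial]
  push_cast
  ring

theorem laguerreSobolevInner_eq_coeff (α N₀ N₁ : ℝ) (P R : ℝ[X]) :
    laguerreSobolevInner α N₀ N₁ P R =
      (∫ t in Ioi (0 : ℝ), (P * R).eval t * t ^ α * exp (-t)) + N₀ * (P.coeff 0 * R.coeff 0) +
        N₁ * (P.coeff 1 * R.coeff 1) := by
  simp [laguerreSobolevInner, ← coeff_zero_eq_eval_zero, coeff_derivative]

theorem fourMassInner_comm (M₀ M₁ M₂ M₃ : ℝ) (P R : ℝ[X]) :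
    fourMassInner M₀ M₁ M₂ M₃ P R = fourMassInner M₀ M₁ M₂ M₃ R P := by
  rw [fourMassInner_eq_coeff, fourMassInner_eq_coeff, mul_comm R P]
  ring

noncomputable def fourMassInnerₗ (M₀ M₁ M₂ M₃ : ℝ) (P : ℝ[X]) : ℝ[X] →ₗ[ℝ] ℝ where
  toFun := fourMassInner M₀ M₁ M₂ M₃ P
  map_add' R₁ R₂ := by
    simp only [fourMassInner_eq_coeff, mul_add, eval_add, add_mul, coeff_add,
      integral_add (integrable_eval_mul_exp_neg_sq _) (integrable_eval_mul_exp_neg_sq _)]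
    ring
  map_smul' a R := by
    simp only [fourMassInner_eq_coeff, mul_smul_comm, eval_smul, coeff_smul, smul_eq_mul, mul_assoc,
      integral_const_mul, RingHom.id_apply]
    ring

theorem fourMassInner_sub_left (M₀ M₁ M₂ M₃ : ℝ) (P Q R : ℝ[X]) :
    fourMassInner M₀ M₁ M₂ M₃ (P - Q) R =
      fourMassInner M₀ M₁ M₂ M₃ P R - fourMassInner M₀ M₁ M₂ M₃ Q R := by
  simp only [fourMassInner_comm _ _ _ _ _ R]
  exact map_sub (fourMassInnerₗ M₀ M₁ M₂ M₃ R) P Q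

theorem fourMassInner_self_pos {M₀ M₁ M₂ M₃ : ℝ} (h₀ : 0 ≤ M₀) (h₁ : 0 ≤ M₁) (h₂ : 0 ≤ M₂)
    (h₃ : 0 ≤ M₃) {d : ℝ[X]} (hd : d ≠ 0) : 0 < fourMassInner M₀ M₁ M₂ M₃ d d := by
  rw [fourMassInner_eq_coeff]
  have := integral_mul_self_mul_exp_neg_sq_pos hd
  have := mul_nonneg h₀ (mul_self_nonneg (d.coeff 0))
  have := mul_nonneg h₁ (mul_self_nonneg (d.coeff 1))
  have := mul_nonneg h₂ (mul_self_nonneg (d.coeff 2))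
  have := mul_nonneg h₃ (mul_self_nonneg (d.coeff 3))
  linarith

theorem fourMassInner_comp_X_sq (M₀ M₁ M₂ M₃ : ℝ) (P Q : ℝ[X]) :
    fourMassInner M₀ M₁ M₂ M₃ (P.comp (X ^ 2)) (Q.comp (X ^ 2)) =
      laguerreSobolevInner (-(1 / 2)) M₀ (4 * M₂) P Q := by
  have hint : ∫ x : ℝ, (P.comp (X ^ 2) * Q.comp (X ^ 2)).eval x * exp (-x ^ 2) =
      ∫ t in Ioi 0, (P * Q).eval t * t ^ (-(1 / 2) : ℝ) * exp (-t) := by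
    simp only [← mul_comp, eval_comp, eval_pow, eval_X]
    refine (integral_comp_sq fun t => (P * Q).eval t * exp (-t)).trans
      (setIntegral_congr_fun measurableSet_Ioi fun t _ => ?_)
    ring
  rw [fourMassInner_eq_coeff, laguerreSobolevInner_eq_coeff, hint]
  simp [← expand_eq_comp_X_pow, coeff_expand]

theorem fourMassInner_X_mul_comp_X_sq (M₀ M₁ M₂ M₃ : ℝ) (P Q : ℝ[X]) :
    fourMassInner M₀ M₁ M₂ M₃ (X * P.comp (X ^ 2)) (X * Q.comp (X ^ 2)) =
      laguerreSobolevInner (1 / 2) M₁ (36 * M₃) P Q := by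
  have hint : ∫ x : ℝ, (X * P.comp (X ^ 2) * (X * Q.comp (X ^ 2))).eval x * exp (-x ^ 2) =
      ∫ t in Ioi 0, (P * Q).eval t * t ^ (1 / 2 : ℝ) * exp (-t) := by
    have hsq : X * P.comp (X ^ 2) * (X * Q.comp (X ^ 2)) = (X * (P * Q)).comp (X ^ 2) := by
      rw [mul_comp, mul_comp, X_comp]
      ring
    simp only [hsq, eval_comp, eval_pow, eval_X]
    refine (integral_comp_sq fun t => (X * (P * Q)).eval t * exp (-t)).trans
      (setIntegral_congr_fun measurableSet_Ioi fun t (ht : 0 < t) => ?_)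
    have hpow : t ^ (1 / 2 : ℝ) = t ^ (-(1 / 2) : ℝ) * t := by
      rw [← rpow_add_one ht.ne']
      norm_num
    rw [hpow, eval_mul, eval_X]
    ring
  rw [fourMassInner_eq_coeff, laguerreSobolevInner_eq_coeff, hint]
  simp [← expand_eq_comp_X_pow, coeff_expand, coeff_X_mul]

theorem fourMassInner_comp_X_sq_X_mul_comp_X_sq_eq_zero (M₀ M₁ M₂ M₃ : ℝ) (P Q : ℝ[X]) :
    fourMassInner M₀ M₁ M₂ M₃ (P.comp (X ^ 2)) (X * Q.comp (X ^ 2)) = 0 := by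
  have hint : ∫ x : ℝ, (P.comp (X ^ 2) * (X * Q.comp (X ^ 2))).eval x * exp (-x ^ 2) = 0 := by
    simp only [eval_mul, eval_comp, eval_pow, eval_X]
    rw [← integral_mul_comp_sq fun t => P.eval t * Q.eval t * exp (-t)]
    simp only [mul_left_comm, mul_assoc]
  rw [fourMassInner_eq_coeff, hint]
  simp [← expand_eq_comp_X_pow, coeff_expand, coeff_X_mul]

theorem fourMassInner_comp_X_sq_eq_zero_of_degree_lt {M₀ M₁ M₂ M₃ : ℝ} {P : ℝ[X]} {n : ℕ}
    (hP : ∀ p : ℝ[X], p.degree < n → laguerreSobolevInner (-(1 / 2)) M₀ (4 * M₂) P p = 0)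
    {p : ℝ[X]} (hp : p.degree < ↑(2 * n)) : fourMassInner M₀ M₁ M₂ M₃ (P.comp (X ^ 2)) p = 0 := by
  refine degreeLT_le_ker (fourMassInnerₗ M₀ M₁ M₂ M₃ _) (fun k hk => ?_) (mem_degreeLT.2 hp)
  obtain ⟨j, rfl | rfl⟩ := Nat.even_or_odd' k
  · rw [X_pow_two_mul_eq_comp]
    exact (fourMassInner_comp_X_sq ..).trans
      (hP _ (by rw [degree_X_pow]; exact_mod_cast (by omega : j < n)))
  · rw [X_pow_two_mul_add_one_eq_X_mul_comp]
    exact fourMassInner_comp_X_sq_X_mul_comp_X_sq_eq_zero ..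

theorem fourMassInner_X_mul_comp_X_sq_eq_zero_of_degree_lt {M₀ M₁ M₂ M₃ : ℝ} {P : ℝ[X]} {n : ℕ}
    (hP : ∀ p : ℝ[X], p.degree < n → laguerreSobolevInner (1 / 2) M₁ (36 * M₃) P p = 0)
    {p : ℝ[X]} (hp : p.degree < ↑(2 * n + 1)) :
    fourMassInner M₀ M₁ M₂ M₃ (X * P.comp (X ^ 2)) p = 0 := by
  refine degreeLT_le_ker (fourMassInnerₗ M₀ M₁ M₂ M₃ _) (fun k hk => ?_) (mem_degreeLT.2 hp)
  obtain ⟨j, rfl | rfl⟩ := Nat.even_or_odd' k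
  · rw [X_pow_two_mul_eq_comp]
    exact (fourMassInner_comm ..).trans (fourMassInner_comp_X_sq_X_mul_comp_X_sq_eq_zero ..)
  · rw [X_pow_two_mul_add_one_eq_X_mul_comp]
    exact (fourMassInner_X_mul_comp_X_sq ..).trans
      (hP _ (by rw [degree_X_pow]; exact_mod_cast (by omega : j < n)))

theorem stmt12 (M₀ M₁ M₂ M₃ : ℝ) (h₀ : 0 ≤ M₀) (h₁ : 0 ≤ M₁) (h₂ : 0 ≤ M₂) (h₃ : 0 ≤ M₃)
    (S L Lt : ℕ → Polynomial ℝ)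
    (hS : IsMonicOrthSeq (fourMassInner M₀ M₁ M₂ M₃) S)
    (hL : IsMonicOrthSeq (laguerreSobolevInner (-(1 / 2)) M₀ (4 * M₂)) L)
    (hLt : IsMonicOrthSeq (laguerreSobolevInner (1 / 2) M₁ (36 * M₃)) Lt) :
    ∀ n : ℕ, S (2 * n) = (L n).comp (X ^ 2) ∧ S (2 * n + 1) = X * (Lt n).comp (X ^ 2) := by
  intro n
  have sub_left := fourMassInner_sub_left M₀ M₁ M₂ M₃
  have pos d := fourMassInner_self_pos h₀ h₁ h₂ h₃ (d := d)
  obtain ⟨hLm, hLn, hL_orth⟩ := hL n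
  obtain ⟨hLtm, hLtn, hLt_orth⟩ := hLt n
  obtain ⟨hEm, hEn⟩ := hLm.comp_X_sq hLn
  obtain ⟨hOm, hOn⟩ := hLtm.X_mul_comp_X_sq hLtn
  exact ⟨hS.eq_of_monic_of_orthogonal sub_left pos hEm hEn
      fun _ => fourMassInner_comp_X_sq_eq_zero_of_degree_lt hL_orth,
    hS.eq_of_monic_of_orthogonal sub_left pos hOm hOn
      fun _ => fourMassInner_X_mul_comp_X_sq_eq_zero_of_degree_lt hLt_orth⟩
end

section
/- For every n ≥ 1 the following identity of real polynomials holds: x² · Σ_{k=0}^{2n} (2^k/k!) · Hₖ′(0) · Hₖ(x) = ((−1)^{n−1}/(n−1)!) · (2x·H₂ₙ(x) + H₂ₙ₋₁(x)). Equivalently, the derivated Hermite kernel K₂ₙ^{(0,1)}(x,0) = Σ_{k=0}^{2n} Hₖ(x)Hₖ′(0)/‖Hₖ‖² equals ((−1)^{n−1}/(√π·(n−1)!)) · (2x·H₂ₙ(x) + H₂ₙ₋₁(x))/x², and K₂ₙ₋₁^{(0,1)}(x,0) equals the same expression. -/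
open Polynomial Finset

/-- The monic Hermite polynomials: `H₀ = 1`, `H₁ = X`,
`H_{n+2} = X·H_{n+1} − ((n+1)/2)·Hₙ`. -/
noncomputable def hermiteM : ℕ → Polynomial ℝ
  | 0 => 1
  | 1 => X
  | n + 2 => X * hermiteM (n + 1) - C (((n : ℝ) + 1) / 2) * hermiteM n

/-- The squared norm of the `n`-th monic Hermite polynomial: `√π · n! / 2ⁿ`. -/
noncomputable def hermiteNormSq (n : ℕ) : ℝ :=
  Real.sqrt Real.pi * n.factorial / 2 ^ n

/-!
The monic Hermite polynomials form an Appell sequence, `Hₙ₊₁' = (n + 1) Hₙ`, so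
`Hₖ'(0) = k Hₖ₋₁(0)` vanishes for even `k` (odd Hermite polynomials vanish at `0`), and for
`k = 2j + 1` the coefficient `2ᵏ/k! · Hₖ'(0)` equals `2 (-1)ʲ / j!`.
The sum thus runs over the odd Hermite polynomials only, and multiplied by `x²` it telescopes:
by the three-term recurrence, `Tⱼ = (-1)ʲ/j! · (2x H₂ⱼ₊₂ + H₂ⱼ₊₁)` satisfies
`Tⱼ - Tⱼ₋₁ = x² · 2 (-1)ʲ/j! · H₂ⱼ₊₁`, with `T₀ = 2x³ = x² · 2H₁`.
-/

lemma hermiteM_add_two (n : ℕ) :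
    hermiteM (n + 2) = X * hermiteM (n + 1) - C (((n : ℝ) + 1) / 2) * hermiteM n := rfl

lemma eval_hermiteM_add_two (n : ℕ) (x : ℝ) :
    (hermiteM (n + 2)).eval x =
      x * (hermiteM (n + 1)).eval x - ((n : ℝ) + 1) / 2 * (hermiteM n).eval x := by
  simp [hermiteM_add_two]

lemma derivative_hermiteM_succ (n : ℕ) :
    derivative (hermiteM (n + 1)) = C ((n : ℝ) + 1) * hermiteM n := by
  induction n using Nat.strong_induction_on with
  | _ n ih =>
    rcases n with _ | _ | n
    · simp [hermiteM]
    · simp only [hermiteM, derivative_sub, derivative_mul, derivative_X, derivative_C, derivative_one,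
        map_add, map_one, map_natCast]
      push_cast
      ring
    · rw [hermiteM_add_two (n + 1), derivative_sub, derivative_mul, derivative_mul,
        ih (n + 1) (by omega), ih n (by omega), derivative_X, derivative_C, hermiteM_add_two n]
      simp only [div_eq_mul_inv, map_mul, map_add, map_natCast, map_one]
      push_cast
      ring

lemma eval_zero_hermiteM_two_mul_add_one (m : ℕ) : (hermiteM (2 * m + 1)).eval 0 = 0 := by
  induction m with
  | zero => simp [hermiteM]
  | succ m ih => rw [show 2 * (m + 1) + 1 = 2 * m + 1 + 2 by ring, eval_hermiteM_add_two, ih]; simp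

lemma two_pow_div_factorial_mul_eval_zero_hermiteM_two_mul (m : ℕ) :
    (2 : ℝ) ^ (2 * m) / (2 * m).factorial * (hermiteM (2 * m)).eval 0 = (-1) ^ m / m.factorial := by
  induction m with
  | zero => simp [hermiteM]
  | succ m ih =>
    calc (2 : ℝ) ^ (2 * (m + 1)) / (2 * (m + 1)).factorial * (hermiteM (2 * (m + 1))).eval 0
        = -1 / (m + 1) * ((2 : ℝ) ^ (2 * m) / (2 * m).factorial * (hermiteM (2 * m)).eval 0) := by
          rw [show 2 * (m + 1) = 2 * m + 2 by ring, eval_hermiteM_add_two,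
            eval_zero_hermiteM_two_mul_add_one, show 2 * m + 2 = 2 * m + 1 + 1 by ring,
            Nat.factorial_succ, Nat.factorial_succ]
          push_cast
          field_simp
          ring
      _ = (-1) ^ (m + 1) / (m + 1).factorial := by
          rw [ih, Nat.factorial_succ]
          push_cast
          field_simp
          ring

lemma eval_zero_derivative_hermiteM_two_mul (m : ℕ) :
    (derivative (hermiteM (2 * m))).eval 0 = 0 := by
  rcases m with _ | m
  · simp [hermiteM]
  · rw [show 2 * (m + 1) = 2 * m + 1 + 1 by ring, derivative_hermiteM_succ, eval_mul,
      eval_zero_hermiteM_two_mul_add_one, mul_zero]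

lemma two_pow_div_factorial_mul_eval_zero_derivative_hermiteM_two_mul_add_one (m : ℕ) :
    (2 : ℝ) ^ (2 * m + 1) / (2 * m + 1).factorial * (derivative (hermiteM (2 * m + 1))).eval 0 =
      2 * ((-1) ^ m / m.factorial) := by
  rw [← two_pow_div_factorial_mul_eval_zero_hermiteM_two_mul, derivative_hermiteM_succ, eval_mul,
    eval_C, Nat.factorial_succ, pow_succ]
  push_cast
  field_simp

lemma sum_range_two_mul_add_one_derivative_hermiteM (n : ℕ) (x : ℝ) :
    ∑ k ∈ range (2 * n + 1),
        (2 : ℝ) ^ k / k.factorial * (derivative (hermiteM k)).eval 0 * (hermiteM k).eval x =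
      ∑ j ∈ range n, 2 * ((-1) ^ j / j.factorial) * (hermiteM (2 * j + 1)).eval x := by
  induction n with
  | zero => simp [hermiteM]
  | succ n ih =>
    rw [show 2 * (n + 1) + 1 = 2 * n + 1 + 1 + 1 by ring, sum_range_succ, sum_range_succ, ih,
      sum_range_succ, two_pow_div_factorial_mul_eval_zero_derivative_hermiteM_two_mul_add_one,
      show 2 * n + 1 + 1 = 2 * (n + 1) by ring, eval_zero_derivative_hermiteM_two_mul]
    ring

lemma sq_mul_sum_range_hermiteM_two_mul_add_one (n : ℕ) (x : ℝ) :
    x ^ 2 * ∑ j ∈ range (n + 1), 2 * ((-1) ^ j / j.factorial) * (hermiteM (2 * j + 1)).eval x =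
      (-1) ^ n / n.factorial * (2 * x * (hermiteM (2 * (n + 1))).eval x +
        (hermiteM (2 * n + 1)).eval x) := by
  induction n with
  | zero =>
    simp only [zero_add, sum_range_one, hermiteM, eval_X, eval_sub, eval_mul, eval_C]
    norm_num
    ring
  | succ n ih =>
    have h₄ : (hermiteM (2 * n + 4)).eval x =
        x * (hermiteM (2 * n + 3)).eval x - (2 * n + 3) / 2 * (hermiteM (2 * n + 2)).eval x := by
      rw [eval_hermiteM_add_two]; push_cast; ring
    have h₃ : (hermiteM (2 * n + 3)).eval x =
        x * (hermiteM (2 * n + 2)).eval x - (n + 1) * (hermiteM (2 * n + 1)).eval x := by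
      rw [eval_hermiteM_add_two]; push_cast; ring
    rw [sum_range_succ, mul_add, ih, show 2 * (n + 1 + 1) = 2 * n + 4 by ring,
      show 2 * (n + 1) + 1 = 2 * n + 3 by ring, show 2 * (n + 1) = 2 * n + 2 by ring,
      pow_succ (-1 : ℝ), Nat.factorial_succ]
    push_cast
    field_simp
    linear_combination 2 * x * h₄ + h₃

lemma eval_mul_derivative_eval_zero_div_hermiteNormSq (k : ℕ) (x : ℝ) :
    (hermiteM k).eval x * (derivative (hermiteM k)).eval 0 / hermiteNormSq k =
      (2 : ℝ) ^ k / k.factorial * (derivative (hermiteM k)).eval 0 * (hermiteM k).eval x /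
        Real.sqrt Real.pi := by
  rw [hermiteNormSq]
  field_simp

theorem stmt15 (n : ℕ) (hn : 1 ≤ n) :
    (X ^ 2 * ∑ k ∈ range (2 * n + 1),
        C ((2 : ℝ) ^ k / k.factorial * (derivative (hermiteM k)).eval 0) * hermiteM k =
      C ((-1 : ℝ) ^ (n - 1) / (n - 1).factorial) *
        (2 * X * hermiteM (2 * n) + hermiteM (2 * n - 1))) ∧
    (∀ x : ℝ, x ≠ 0 →
      ∑ k ∈ range (2 * n + 1),
          (hermiteM k).eval x * (derivative (hermiteM k)).eval 0 / hermiteNormSq k =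
        (-1 : ℝ) ^ (n - 1) / (Real.sqrt Real.pi * (n - 1).factorial) *
          ((2 * x * (hermiteM (2 * n)).eval x + (hermiteM (2 * n - 1)).eval x) / x ^ 2)) ∧
    (∀ x : ℝ, x ≠ 0 →
      ∑ k ∈ range (2 * n),
          (hermiteM k).eval x * (derivative (hermiteM k)).eval 0 / hermiteNormSq k =
        (-1 : ℝ) ^ (n - 1) / (Real.sqrt Real.pi * (n - 1).factorial) *
          ((2 * x * (hermiteM (2 * n)).eval x + (hermiteM (2 * n - 1)).eval x) / x ^ 2)) := by
  obtain ⟨m, rfl⟩ : ∃ m, n = m + 1 := ⟨n - 1, by omega⟩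
  rw [Nat.add_sub_cancel, show 2 * (m + 1) - 1 = 2 * m + 1 by omega]
  have hsum (x : ℝ) : x ^ 2 * ∑ k ∈ range (2 * (m + 1) + 1),
      (2 : ℝ) ^ k / k.factorial * (derivative (hermiteM k)).eval 0 * (hermiteM k).eval x =
        (-1) ^ m / m.factorial * (2 * x * (hermiteM (2 * (m + 1))).eval x +
          (hermiteM (2 * m + 1)).eval x) := by
    rw [sum_range_two_mul_add_one_derivative_hermiteM, sq_mul_sum_range_hermiteM_two_mul_add_one]
  have hkernel (x : ℝ) (hx : x ≠ 0) : ∑ k ∈ range (2 * (m + 1) + 1),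
      (hermiteM k).eval x * (derivative (hermiteM k)).eval 0 / hermiteNormSq k =
        (-1 : ℝ) ^ m / (Real.sqrt Real.pi * m.factorial) *
          ((2 * x * (hermiteM (2 * (m + 1))).eval x + (hermiteM (2 * m + 1)).eval x) / x ^ 2) := by
    simp_rw [eval_mul_derivative_eval_zero_div_hermiteNormSq, ← sum_div,
      eq_div_of_mul_eq (pow_ne_zero 2 hx) ((mul_comm _ _).trans (hsum x))]
    ring
  refine ⟨Polynomial.funext fun x => ?_, hkernel, fun x hx => ?_⟩
  · simp only [eval_mul, eval_pow, eval_X, eval_finsetSum, eval_C, eval_add, eval_ofNat]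
    exact hsum x
  · rw [← hkernel x hx, sum_range_succ _ (2 * (m + 1)), eval_zero_derivative_hermiteM_two_mul]
    simp
end
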